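/- arXiv:2310.12355 — 3 statements merged into one kernel-verified Lean document; each statement's English description precedes it below -/
import Mathlib

section
/- For all n ≥ 4 and all p ∈ (0,1): E_{n,p}[ d(2) · 1_{d(1)≥1}/d(1) ] = (n−2)² p² (1−p) · E[ 1/(1+B_{n−3})² ] + (1 + (n−2)p) · (1 − (1−p)^{n−1}) / (n−1), where B_{n−3} is a Binomial(n−3, p) random variable. -/
open MeasureTheory Filter
open scoped Classical

namespace ERW

/-- Bernoulli measure on `Bool` with success probability `p`. -/
noncomputable def bern (p : ℝ) : Measure Bool :=
  (ENNReal.ofReal p) • Measure.dirac true + (ENNReal.ofReal (1 - p)) • Measure.dirac false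

/-- The Erdős–Rényi measure: each potential edge (unordered pair of vertices) is present
independently with probability `p`. -/
noncomputable def erMeasure (n : ℕ) (p : ℝ) : Measure (Sym2 (Fin n) → Bool) :=
  Measure.pi fun _ => bern p

/-- The graph determined by an edge configuration `ω` (diagonal coordinates are ignored). -/
def graphOf {n : ℕ} (ω : Sym2 (Fin n) → Bool) : SimpleGraph (Fin n) where
  Adj i j := i ≠ j ∧ ω s(i, j) = true
  symm := by
    refine ⟨?_⟩
    intro i j h
    exact ⟨h.1.symm, Sym2.eq_swap (a := j) ▸ h.2⟩
  loopless := by refine ⟨?_⟩; intro i h; exact h.1 rfl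

/-- The degree `d(v)` of vertex `v`. -/
noncomputable def deg {n : ℕ} (ω : Sym2 (Fin n) → Bool) (v : Fin n) : ℕ :=
  Set.ncard {u | (graphOf ω).Adj v u}

/-- The random variable `1_{d(v) ≥ 1} / d(v)`. -/
noncomputable def invDeg {n : ℕ} (ω : Sym2 (Fin n) → Bool) (v : Fin n) : ℝ :=
  if deg ω v = 0 then 0 else 1 / (deg ω v : ℝ)

/-- `|C(v)|`: the number of vertices in the connected component of `v`. -/
noncomputable def compSize {n : ℕ} (ω : Sym2 (Fin n) → Bool) (v : Fin n) : ℕ :=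
  Set.ncard {u | (graphOf ω).Reachable v u}

/-- `|E(C(v))|`: the number of present edges with both endpoints in the component of `v`. -/
noncomputable def edgesInComp {n : ℕ} (ω : Sym2 (Fin n) → Bool) (v : Fin n) : ℕ :=
  Set.ncard {e : Sym2 (Fin n) | e ∈ (graphOf ω).edgeSet ∧ ∀ u ∈ e, (graphOf ω).Reachable v u}

/-- `T(n,p) = E_{n,p}[ 2|E(C(1))| ⋅ 1_{d(1)≥1}/d(1) + 1_{d(1)=0} ]`, the expected first return
time to vertex `1` (here vertex `⟨0,_⟩`) of a simple random walk on `G(n,p)`. -/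
noncomputable def T (n : ℕ) (p : ℝ) : ℝ :=
  if h : 0 < n then
    ∫ ω, (2 * (edgesInComp ω ⟨0, h⟩ : ℝ) * invDeg ω ⟨0, h⟩
      + (if deg ω ⟨0, h⟩ = 0 then 1 else 0)) ∂(erMeasure n p)
  else 0

/-- Expectation of `f(B)` for `B ~ Binomial(m,p)`, written as a finite sum. -/
noncomputable def binomExp (m : ℕ) (p : ℝ) (f : ℕ → ℝ) : ℝ :=
  ∑ k ∈ Finset.range (m + 1), f k * (Nat.choose m k : ℝ) * p ^ k * (1 - p) ^ (m - k)


/-! ### Auxiliary machinery -/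

section Aux

open Finset

/-! #### Integral over the product measure as a finite sum -/

lemma bern_apply_singleton (p : ℝ) (b : Bool) :
    bern p {b} = ENNReal.ofReal (if b then p else 1 - p) := by
  cases b <;> simp [bern, Measure.dirac_apply]

lemma bern_prob (p : ℝ) (hp0 : 0 ≤ p) (hp1 : p ≤ 1) : IsProbabilityMeasure (bern p) := by
  constructor
  simp only [bern, Measure.coe_add, Measure.coe_smul, Pi.add_apply, Pi.smul_apply,
    Measure.dirac_apply, Set.mem_univ, Set.indicator_of_mem, Pi.one_apply, smul_eq_mul, mul_one]
  rw [← ENNReal.ofReal_add hp0 (by linarith)]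
  norm_num

lemma integral_erMeasure (n : ℕ) (p : ℝ) (hp0 : 0 ≤ p) (hp1 : p ≤ 1)
    (f : (Sym2 (Fin n) → Bool) → ℝ) :
    ∫ ω, f ω ∂(erMeasure n p) =
      ∑ ω : Sym2 (Fin n) → Bool, f ω * ∏ e : Sym2 (Fin n), (if ω e then p else 1 - p) := by
  haveI : IsProbabilityMeasure (bern p) := bern_prob p hp0 hp1
  haveI : IsProbabilityMeasure (erMeasure n p) := by
    unfold erMeasure; infer_instance
  rw [integral_fintype Integrable.of_finite]
  refine Finset.sum_congr rfl fun ω _ => ?_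
  rw [smul_eq_mul, mul_comm]
  congr 1
  have h1 : ({ω} : Set (Sym2 (Fin n) → Bool)) = Set.univ.pi fun e => {ω e} :=
    (Set.univ_pi_singleton ω).symm
  rw [measureReal_def, erMeasure, h1, Measure.pi_pi]
  rw [ENNReal.toReal_prod]
  refine Finset.prod_congr rfl fun e _ => ?_
  rw [bern_apply_singleton p, ENNReal.toReal_ofReal]
  split <;> linarith

/-! #### Sums over Boolean cubes -/

lemma sum_pi_bool_split {I : Type*} [Fintype I] [DecidableEq I] (P : I → Prop) [DecidablePred P]
    (Φ : ({i // P i} → Bool) → ℝ) (Ψ : ({i // ¬ P i} → Bool) → ℝ) :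
    ∑ ω : I → Bool, Φ (fun i => ω i) * Ψ (fun i => ω i)
      = (∑ σ : {i // P i} → Bool, Φ σ) * (∑ τ : {i // ¬ P i} → Bool, Ψ τ) := by
  calc ∑ ω : I → Bool, Φ (fun i => ω i) * Ψ (fun i => ω i)
      = ∑ x : ({i // P i} → Bool) × ({i // ¬ P i} → Bool), Φ x.1 * Ψ x.2 :=
        Fintype.sum_equiv (Equiv.piEquivPiSubtypeProd P (fun _ => Bool)) _ _ (fun ω => rfl)
    _ = ∑ σ : {i // P i} → Bool, ∑ τ : {i // ¬ P i} → Bool, Φ σ * Ψ τ :=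
        Fintype.sum_prod_type _
    _ = _ := (Finset.sum_mul_sum _ _ _ _).symm

/-- Count of `true` coordinates. -/
def cnt {I : Type*} [Fintype I] (σ : I → Bool) : ℕ :=
  (Finset.univ.filter fun i => σ i = true).card

lemma sum_pi_bool_count {I : Type*} [Fintype I] [DecidableEq I] (g : ℕ → ℝ) (p q : ℝ) :
    ∑ σ : I → Bool, g (cnt σ) * ∏ i : I, (if σ i then p else q)
      = ∑ k ∈ range (Fintype.card I + 1),
          g k * ((Fintype.card I).choose k : ℝ) * p ^ k * q ^ (Fintype.card I - k) := by
  have hw : ∀ σ : I → Bool, (∏ i : I, (if σ i then p else q))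
      = p ^ (cnt σ) * q ^ (Fintype.card I - cnt σ) := by
    intro σ
    rw [← Finset.prod_filter_mul_prod_filter_not Finset.univ (fun i => σ i = true)]
    rw [Finset.prod_congr rfl (fun i hi => if_pos (Finset.mem_filter.mp hi).2),
      Finset.prod_congr rfl (fun i hi => if_neg (by simpa using (Finset.mem_filter.mp hi).2)),
      Finset.prod_const, Finset.prod_const]
    congr 1
    rw [Finset.filter_not, Finset.card_sdiff_of_subset (Finset.filter_subset _ _)]
    simp [cnt]
  simp only [hw]
  rw [show ∑ σ : I → Bool, g (cnt σ) * (p ^ cnt σ * q ^ (Fintype.card I - cnt σ))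
      = ∑ s ∈ (Finset.univ : Finset I).powerset,
          g s.card * (p ^ s.card * q ^ (Fintype.card I - s.card)) from
    Finset.sum_nbij' (i := fun σ => Finset.univ.filter fun i => σ i = true)
      (j := fun s => fun i => decide (i ∈ s))
      (fun σ _ => Finset.mem_powerset.mpr (Finset.filter_subset _ _))
      (fun s _ => Finset.mem_univ _)
      (fun σ _ => by funext i; by_cases h : σ i = true <;> simp [h])
      (fun s _ => by ext i; simp)
      (fun σ _ => by rfl)]
  rw [Finset.sum_powerset, Finset.card_univ]
  refine Finset.sum_congr rfl fun k hk => ?_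
  rw [Finset.sum_congr rfl (fun s hs => by
      rw [(Finset.mem_powersetCard.mp hs).2]),
    Finset.sum_const, Finset.card_powersetCard, Finset.card_univ]
  ring

lemma binom_thm (m : ℕ) (p q : ℝ) (hpq : p + q = 1) :
    ∑ k ∈ range (m + 1), (m.choose k : ℝ) * p ^ k * q ^ (m - k) = 1 := by
  have h := add_pow p q m
  rw [hpq, one_pow] at h
  conv_rhs => rw [h]
  exact Finset.sum_congr rfl fun k _ => by ring

lemma sum_pi_bool_one {I : Type*} [Fintype I] [DecidableEq I] (p q : ℝ) (hpq : p + q = 1) :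
    ∑ τ : I → Bool, ∏ i : I, (if τ i then p else q) = 1 := by
  have h := sum_pi_bool_count (I := I) (fun _ => 1) p q
  simp only [one_mul] at h
  rw [h]
  exact binom_thm _ p q hpq

lemma sum_pi_bool_ind {I : Type*} [Fintype I] [DecidableEq I] (hcard : Fintype.card I = 1) (c : I) (b : Bool)
    (p q : ℝ) :
    ∑ τ : I → Bool, (if τ c = b then 1 else 0) * ∏ i : I, (if τ i then p else q)
      = (if b then p else q) := by
  have h1 : (Finset.univ : Finset I).card = 1 := by rw [Finset.card_univ, hcard]
  have huniv : (Finset.univ : Finset I) = {c} := by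
    obtain ⟨x, hx⟩ := Finset.card_eq_one.mp h1
    rw [hx]
    have := Finset.mem_univ c
    rw [hx, Finset.mem_singleton] at this
    rw [this]
  have hind : ∀ τ : I → Bool, (if τ c = b then (1:ℝ) else 0)
      = (if cnt τ = (if b then 1 else 0) then 1 else 0) := by
    intro τ
    have : cnt τ = (if τ c then 1 else 0) := by
      rw [cnt, huniv]
      by_cases h : τ c = true <;> simp [Finset.filter_singleton, h]
    rw [this]
    cases hb : τ c <;> cases b <;> simp
  rw [Finset.sum_congr rfl fun τ _ => by rw [hind τ]]
  rw [sum_pi_bool_count (fun k => if k = (if b then 1 else 0) then 1 else 0) p q, hcard]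
  rw [Finset.sum_range_succ, Finset.sum_range_one]
  cases b <;> simp

/-! #### Binomial identities -/

lemma choose_succ_real (m j : ℕ) (hj : j < m) :
    ((j : ℝ) + 1) * (m.choose (j + 1) : ℝ) = m * ((m - 1).choose j : ℝ) := by
  have hm : m - 1 + 1 = m := by omega
  have h := Nat.add_one_mul_choose_eq (m - 1) j
  simp only [Nat.succ_eq_add_one, hm] at h
  have h2 : ((m * (m-1).choose j : ℕ) : ℝ) = ((m.choose (j+1) * (j+1) : ℕ) : ℝ) :=
    congrArg (Nat.cast : ℕ → ℝ) h
  push_cast at h2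
  linarith

lemma binom_mean (m : ℕ) (p q : ℝ) (hpq : p + q = 1) :
    ∑ l ∈ range (m + 1), (l : ℝ) * (m.choose l : ℝ) * p ^ l * q ^ (m - l) = m * p := by
  rcases Nat.eq_zero_or_pos m with hm | hm
  · subst hm; simp
  rw [Finset.sum_range_succ']
  have key : ∀ j ∈ range m, ((j+1 : ℕ) : ℝ) * (m.choose (j+1) : ℝ) * p ^ (j+1) * q ^ (m - (j+1))
      = (m : ℝ) * p * (((m-1).choose j : ℝ) * p ^ j * q ^ ((m-1) - j)) := by
    intro j hj
    rw [mem_range] at hj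
    have h1 := choose_succ_real m j hj
    have h2 : m - (j+1) = (m-1) - j := by omega
    rw [h2]
    push_cast
    linear_combination (p ^ (j+1) * q ^ (m-1-j)) * h1
  rw [Finset.sum_congr rfl key, ← Finset.mul_sum]
  have hm1 : m - 1 + 1 = m := by omega
  have hb := binom_thm (m-1) p q hpq
  rw [hm1] at hb
  rw [hb]
  push_cast
  ring

lemma choose_succ_real' (m k : ℕ) :
    ((m : ℝ) + 1) * (m.choose k : ℝ) = ((m+1).choose (k+1) : ℝ) * ((k : ℝ) + 1) := by
  have h := Nat.add_one_mul_choose_eq m k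
  exact_mod_cast congrArg (Nat.cast : ℕ → ℝ) h

lemma binom_invsucc (m : ℕ) (p q : ℝ) (hpq : p + q = 1) (hp : p ≠ 0) :
    ∑ k ∈ range (m + 1), (1 / (1 + (k : ℝ))) * (m.choose k : ℝ) * p ^ k * q ^ (m - k)
      = (1 - q ^ (m + 1)) / (((m : ℝ) + 1) * p) := by
  have hm1 : ((m : ℝ) + 1) * p ≠ 0 := by
    apply mul_ne_zero _ hp
    positivity
  rw [eq_div_iff hm1, Finset.sum_mul]
  have key : ∀ k ∈ range (m+1),
      (1 / (1 + (k:ℝ))) * (m.choose k : ℝ) * p ^ k * q ^ (m - k) * (((m:ℝ)+1) * p)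
        = ((m+1).choose (k+1) : ℝ) * p ^ (k+1) * q ^ ((m+1) - (k+1)) := by
    intro k hk
    have h1 := choose_succ_real' m k
    have h2 : (m+1) - (k+1) = m - k := by omega
    rw [h2]
    have hk0 : (1 : ℝ) + (k:ℝ) ≠ 0 := by positivity
    field_simp
    linear_combination (p ^ (k+1) * q ^ (m-k)) * h1
  rw [Finset.sum_congr rfl key]
  have hb := binom_thm (m+1) p q hpq
  rw [Finset.sum_range_succ'] at hb
  simp only [Nat.choose_zero_right, Nat.cast_one, one_mul, pow_zero, Nat.sub_zero] at hb
  linarith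

lemma binom_invpos (m : ℕ) (p q : ℝ) :
    ∑ k ∈ range (m + 1), (if k = 0 then 0 else 1 / (k : ℝ)) * (m.choose k : ℝ) * p ^ k * q ^ (m - k)
      = (m : ℝ) * p *
        ∑ j ∈ range m, (1 / (1 + (j : ℝ)) ^ 2) * ((m-1).choose j : ℝ) * p ^ j * q ^ ((m-1) - j) := by
  rcases Nat.eq_zero_or_pos m with hm | hm
  · subst hm; simp
  rw [Finset.sum_range_succ']
  simp only [if_pos rfl, zero_mul, add_zero]
  have key : ∀ j ∈ range m,
      (if j+1 = 0 then 0 else 1 / ((j+1 : ℕ) : ℝ)) * (m.choose (j+1) : ℝ) * p ^ (j+1) * q ^ (m - (j+1))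
        = (m : ℝ) * p * ((1 / (1 + (j:ℝ)) ^ 2) * ((m-1).choose j : ℝ) * p ^ j * q ^ ((m-1) - j)) := by
    intro j hj
    rw [mem_range] at hj
    have h1 := choose_succ_real m j hj
    have h2 : m - (j+1) = (m-1) - j := by omega
    rw [h2, if_neg (Nat.succ_ne_zero j)]
    push_cast
    have hj0 : (1 : ℝ) + (j:ℝ) ≠ 0 := by positivity
    field_simp
    linear_combination (p ^ (j+1) * q ^ (m-1-j) * ((j:ℝ)+1)) * h1
  rw [Finset.sum_congr rfl key, ← Finset.mul_sum]
  simp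

/-! #### Subtype counting transfers -/

lemma cnt_subtype {β : Type*} [Fintype β] (Q : β → Prop) [Fintype {e // Q e}] (ω : β → Bool) :
    cnt (fun j : {e // Q e} => ω j.1) = (univ.filter fun e => Q e ∧ ω e = true).card := by
  unfold cnt
  apply Finset.card_bij (fun j _ => j.1)
  · intro a ha
    simp only [mem_filter, mem_univ, true_and] at ha ⊢
    exact ⟨a.2, ha⟩
  · intro a _ b _ h
    exact Subtype.ext h
  · intro e he
    simp only [mem_filter, mem_univ, true_and] at he
    exact ⟨⟨e, he.1⟩, by simp [he.2], rfl⟩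

lemma cnt_subtype2 {β : Type*} [Fintype β] (Q R : β → Prop) [Fintype {e // Q e}]
    [Fintype {j : {e // Q e} // R j.1}] (ω : β → Bool) :
    cnt (fun k : {j : {e // Q e} // R j.1} => ω k.1.1)
      = (univ.filter fun e => Q e ∧ R e ∧ ω e = true).card := by
  unfold cnt
  apply Finset.card_bij (fun k _ => k.1.1)
  · intro a ha
    simp only [mem_filter, mem_univ, true_and] at ha ⊢
    exact ⟨a.1.2, a.2, ha⟩
  · intro a _ b _ h
    exact Subtype.ext (Subtype.ext h)
  · intro e he
    simp only [mem_filter, mem_univ, true_and] at he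
    exact ⟨⟨⟨e, he.1⟩, he.2.1⟩, by simp [he.2.2], rfl⟩

lemma card_subtype2 {β : Type*} [Fintype β] (Q : β → Prop) (R : β → Prop) [Fintype {e // Q e}]
    [Fintype {j : {e // Q e} // R j.1}] :
    Fintype.card {j : {e // Q e} // R j.1} = (univ.filter fun e => Q e ∧ R e).card := by
  rw [← Finset.card_univ]
  apply Finset.card_bij (fun k _ => k.1.1)
  · intro a _
    simp only [mem_filter, mem_univ, true_and]
    exact ⟨a.1.2, a.2⟩
  · intro a _ b _ h
    exact Subtype.ext (Subtype.ext h)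
  · intro e he
    simp only [mem_filter, mem_univ, true_and] at he
    exact ⟨⟨⟨e, he.1⟩, he.2⟩, mem_univ _, rfl⟩

lemma card_subtype3 {β : Type*} [Fintype β] (Q R S : β → Prop) [Fintype {e // Q e}]
    [Fintype {j : {e // Q e} // R j.1}] [Fintype {k : {j : {e // Q e} // R j.1} // S k.1.1}] :
    Fintype.card {k : {j : {e // Q e} // R j.1} // S k.1.1}
      = (univ.filter fun e => Q e ∧ R e ∧ S e).card := by
  rw [← Finset.card_univ]
  apply Finset.card_bij (fun k _ => k.1.1.1)
  · intro a _
    simp only [mem_filter, mem_univ, true_and]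
    exact ⟨a.1.1.2, a.1.2, a.2⟩
  · intro a _ b _ h
    exact Subtype.ext (Subtype.ext (Subtype.ext h))
  · intro e he
    simp only [mem_filter, mem_univ, true_and] at he
    exact ⟨⟨⟨⟨e, he.1⟩, he.2.1⟩, he.2.2⟩, mem_univ _, rfl⟩

/-! #### Graph edge blocks -/

/-- block predicate: edges from `v0` to vertices other than `v1`. -/
def P0 {n : ℕ} (v0 v1 : Fin n) (e : Sym2 (Fin n)) : Prop := v0 ∈ e ∧ ¬ v1 ∈ e ∧ ¬ e.IsDiag
def P2 {n : ℕ} (v0 v1 : Fin n) (e : Sym2 (Fin n)) : Prop := v0 ∈ e ∧ v1 ∈ e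

lemma P2_iff {n : ℕ} (v0 v1 : Fin n) (hne : v0 ≠ v1) (e : Sym2 (Fin n)) :
    P2 v0 v1 e ↔ e = s(v0, v1) := by
  induction e with
  | _ a b =>
    simp only [P2, Sym2.mem_iff, Sym2.eq_iff]
    constructor
    · rintro ⟨h1 | h1, h2 | h2⟩ <;> subst h1 <;> subst h2 <;> tauto
    · rintro (⟨rfl, rfl⟩ | ⟨rfl, rfl⟩) <;> tauto

lemma mk_left_injective {n : ℕ} (v0 : Fin n) : Function.Injective (fun u => s(v0, u)) := by
  intro u u' h
  rcases Sym2.eq_iff.mp h with ⟨-, h2⟩ | ⟨h1, h2⟩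
  · exact h2
  · rw [← h1, h2]

lemma deg_eq_card_filter {n : ℕ} (ω : Sym2 (Fin n) → Bool) (v : Fin n) :
    deg ω v = (univ.filter fun u => v ≠ u ∧ ω s(v, u) = true).card := by
  have h : {u | (graphOf ω).Adj v u}
      = ↑(univ.filter fun u => v ≠ u ∧ ω s(v, u) = true) := by
    ext u; simp [graphOf]
  rw [deg, h, Set.ncard_coe_finset]

lemma deg_split {n : ℕ} (v0 v1 : Fin n) (hne : v0 ≠ v1) (ω : Sym2 (Fin n) → Bool) :
    deg ω v0 = (if ω s(v0, v1) = true then 1 else 0)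
      + (univ.filter fun e => P0 v0 v1 e ∧ ω e = true).card := by
  rw [deg_eq_card_filter]
  have hcard2 : (univ.filter fun u => v0 ≠ u ∧ ω s(v0, u) = true).card
      = (univ.filter fun e : Sym2 (Fin n) => v0 ∈ e ∧ ¬ e.IsDiag ∧ ω e = true).card := by
    apply Finset.card_bij (fun u _ => s(v0, u))
    · intro u hu
      simp only [mem_filter, mem_univ, true_and] at hu ⊢
      refine ⟨Sym2.mem_mk_left _ _, ?_, hu.2⟩
      simp [Sym2.isDiag_iff_proj_eq]
      exact fun h => hu.1 h
    · intro a _ b _ h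
      exact mk_left_injective v0 h
    · intro e he
      simp only [mem_filter, mem_univ, true_and] at he
      obtain ⟨h1, h2, h3⟩ := he
      refine ⟨Sym2.Mem.other' h1, ?_, ?_⟩
      · simp only [mem_filter, mem_univ, true_and]
        have hs := Sym2.other_spec' h1
        constructor
        · intro hcon
          apply h2
          rw [← hs, ← hcon]
          exact Sym2.mk_isDiag_iff.mpr rfl
        · rw [hs]; exact h3
      · exact Sym2.other_spec' h1
  rw [hcard2]
  have hsplit : (univ.filter fun e : Sym2 (Fin n) => v0 ∈ e ∧ ¬ e.IsDiag ∧ ω e = true)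
      = (univ.filter fun e => (e = s(v0,v1) ∧ ω e = true) ∨ (P0 v0 v1 e ∧ ω e = true)) := by
    apply Finset.filter_congr
    intro e _
    constructor
    · rintro ⟨h1, h2, h3⟩
      by_cases hv1 : v1 ∈ e
      · exact Or.inl ⟨(P2_iff v0 v1 hne e).mp ⟨h1, hv1⟩, h3⟩
      · exact Or.inr ⟨⟨h1, hv1, h2⟩, h3⟩
    · rintro (⟨rfl, h3⟩ | ⟨⟨h1, _, h2⟩, h3⟩)
      · refine ⟨Sym2.mem_mk_left _ _, ?_, h3⟩
        simp [Sym2.mk_isDiag_iff]; exact hne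
      · exact ⟨h1, h2, h3⟩
  rw [hsplit, Finset.filter_or, Finset.card_union_of_disjoint, add_left_cancel_iff.mpr rfl]
  · congr 1
    by_cases h : ω s(v0,v1) = true
    · rw [if_pos h]
      rw [show (univ.filter fun e : Sym2 (Fin n) => e = s(v0,v1) ∧ ω e = true) = {s(v0,v1)} from by
        ext e; simp (config := {contextual := true}) [h]]
      simp
    · rw [if_neg h]
      rw [show (univ.filter fun e : Sym2 (Fin n) => e = s(v0,v1) ∧ ω e = true) = ∅ from by
        ext e; simp (config := {contextual := true}) [h]]
      simp
  · rw [Finset.disjoint_left]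
    rintro e he1 he2
    simp only [mem_filter] at he1 he2
    obtain ⟨-, rfl, -⟩ := he1
    exact he2.2.1.2.1 (Sym2.mem_mk_right _ _)

lemma card_filter_P0 {n : ℕ} (v0 v1 : Fin n) (hne : v0 ≠ v1) :
    (univ.filter (P0 v0 v1)).card = n - 2 := by
  have h1 : (univ.filter fun u : Fin n => u ≠ v0 ∧ u ≠ v1).card = n - 2 := by
    have h : (univ.filter fun u : Fin n => u ≠ v0 ∧ u ≠ v1) = univ \ {v0, v1} := by
      ext u
      simp only [mem_filter, mem_univ, true_and, mem_sdiff, mem_insert, mem_singleton]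
      simp only [Finset.mem_sdiff, Finset.mem_univ, true_and, Finset.mem_insert, Finset.mem_singleton]
      tauto
    rw [h, Finset.card_sdiff_of_subset (by simp), Finset.card_univ, Fintype.card_fin,
      Finset.card_pair hne]
  rw [← h1]
  symm
  apply Finset.card_bij (fun u _ => s(v0, u))
  · intro u hu
    simp only [mem_filter, mem_univ, true_and] at hu ⊢
    refine ⟨Sym2.mem_mk_left _ _, ?_, ?_⟩
    · intro hmem
      rcases Sym2.mem_iff.mp hmem with h | h
      · exact hne h.symm
      · exact hu.2 h.symm
    · rw [Sym2.mk_isDiag_iff]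
      exact fun h => hu.1 h.symm
  · intro a _ b _ h
    exact mk_left_injective v0 h
  · intro e he
    simp only [mem_filter, mem_univ, true_and] at he
    obtain ⟨h1', h2, h3⟩ := he
    refine ⟨Sym2.Mem.other' h1', ?_, Sym2.other_spec' h1'⟩
    simp only [mem_filter, mem_univ, true_and]
    constructor
    · intro hcon
      apply h3
      rw [← Sym2.other_spec' h1', hcon]
      exact Sym2.mk_isDiag_iff.mpr rfl
    · intro hcon
      apply h2
      rw [← Sym2.other_spec' h1', ← hcon]
      exact Sym2.mem_mk_right _ _

/-! #### Block decomposition functions -/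

noncomputable def g0 (k : ℕ) : ℝ := if k = 0 then 0 else 1 / (k : ℝ)

noncomputable def bb (b : Bool) : ℕ := if b then 1 else 0

variable {n : ℕ} (v0 v1 : Fin n) (p q : ℝ) (b : Bool)

noncomputable def PhiA : ({e : Sym2 (Fin n) // P0 v0 v1 e} → Bool) → ℝ :=
  fun σ => g0 (bb b + cnt σ) * ∏ i, (if σ i then p else q)

noncomputable def PhiB : ({j : {e : Sym2 (Fin n) // ¬ P0 v0 v1 e} // P0 v1 v0 j.1} → Bool) → ℝ :=
  fun σ => ((bb b + cnt σ : ℕ) : ℝ) * ∏ i, (if σ i then p else q)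

noncomputable def chat : {k : {j : {e : Sym2 (Fin n) // ¬ P0 v0 v1 e} // ¬ P0 v1 v0 j.1} // P2 v0 v1 k.1.1} :=
  ⟨⟨⟨s(v0,v1), fun h => h.2.1 (Sym2.mem_mk_right _ _)⟩,
      fun h => h.2.1 (Sym2.mem_mk_left _ _)⟩,
    ⟨Sym2.mem_mk_left _ _, Sym2.mem_mk_right _ _⟩⟩

noncomputable def PhiC :
    ({k : {j : {e : Sym2 (Fin n) // ¬ P0 v0 v1 e} // ¬ P0 v1 v0 j.1} // P2 v0 v1 k.1.1} → Bool) → ℝ :=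
  fun σ => (if σ (chat v0 v1) = b then 1 else 0) * ∏ i, (if σ i then p else q)

noncomputable def PsiC :
    ({k : {j : {e : Sym2 (Fin n) // ¬ P0 v0 v1 e} // ¬ P0 v1 v0 j.1} // ¬ P2 v0 v1 k.1.1} → Bool) → ℝ :=
  fun σ => ∏ i, (if σ i then p else q)

noncomputable def PsiB : ({j : {e : Sym2 (Fin n) // ¬ P0 v0 v1 e} // ¬ P0 v1 v0 j.1} → Bool) → ℝ :=
  fun τ => PhiC v0 v1 p q b (fun k => τ k.1) * PsiC v0 v1 p q (fun k => τ k.1)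

noncomputable def PsiA : ({e : Sym2 (Fin n) // ¬ P0 v0 v1 e} → Bool) → ℝ :=
  fun τ => PhiB v0 v1 p q b (fun j => τ j.1) * PsiB v0 v1 p q b (fun j => τ j.1)

lemma pointwise (hne : v0 ≠ v1) (ω : Sym2 (Fin n) → Bool) :
    ((if ω s(v0,v1) = b then (1:ℝ) else 0)
      * (((bb b + (univ.filter fun e => P0 v1 v0 e ∧ ω e = true).card : ℕ) : ℝ)
        * g0 (bb b + (univ.filter fun e => P0 v0 v1 e ∧ ω e = true).card)))
      * ∏ e : Sym2 (Fin n), (if ω e then p else q)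
    = PhiA v0 v1 p q b (fun i => ω i.1) * PsiA v0 v1 p q b (fun i => ω i.1) := by
  unfold PhiA PsiA PhiB PsiB PhiC PsiC
  simp only []
  have hcntA : cnt (fun i : {e : Sym2 (Fin n) // P0 v0 v1 e} => ω i.1)
      = (univ.filter fun e => P0 v0 v1 e ∧ ω e = true).card := cnt_subtype _ ω
  have hcntB : cnt (fun k : {j : {e : Sym2 (Fin n) // ¬ P0 v0 v1 e} // P0 v1 v0 j.1} => ω k.1.1)
      = (univ.filter fun e => P0 v1 v0 e ∧ ω e = true).card := by
    refine Eq.trans (cnt_subtype2 (fun e => ¬ P0 v0 v1 e) (P0 v1 v0) ω) ?_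
    congr 1
    ext e
    simp only [mem_filter, mem_univ, true_and]
    constructor
    · rintro ⟨-, h2, h3⟩; exact ⟨h2, h3⟩
    · rintro ⟨h2, h3⟩; exact ⟨fun h => h.2.1 h2.1, h2, h3⟩
  have hval : ((chat v0 v1 (n := n)).1.1.1) = s(v0,v1) := rfl
  have hprod : (∏ e : Sym2 (Fin n), (if ω e then p else q))
      = (∏ i : {e : Sym2 (Fin n) // P0 v0 v1 e}, (if ω i.1 then p else q))
        * ((∏ i : {j : {e : Sym2 (Fin n) // ¬ P0 v0 v1 e} // P0 v1 v0 j.1}, (if ω i.1.1 then p else q))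
          * ((∏ i : {k : {j : {e : Sym2 (Fin n) // ¬ P0 v0 v1 e} // ¬ P0 v1 v0 j.1} // P2 v0 v1 k.1.1},
                (if ω i.1.1.1 then p else q))
            * (∏ i : {k : {j : {e : Sym2 (Fin n) // ¬ P0 v0 v1 e} // ¬ P0 v1 v0 j.1} // ¬ P2 v0 v1 k.1.1},
                (if ω i.1.1.1 then p else q)))) := by
    rw [← Fintype.prod_subtype_mul_prod_subtype (P0 v0 v1) (fun e => if ω e then p else q)]
    congr 1
    rw [← Fintype.prod_subtype_mul_prod_subtype (fun j : {e : Sym2 (Fin n) // ¬ P0 v0 v1 e} => P0 v1 v0 j.1)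
      (fun j => if ω j.1 then p else q)]
    congr 1
    rw [← Fintype.prod_subtype_mul_prod_subtype
      (fun k : {j : {e : Sym2 (Fin n) // ¬ P0 v0 v1 e} // ¬ P0 v1 v0 j.1} => P2 v0 v1 k.1.1)
      (fun k => if ω k.1.1 then p else q)]
  rw [hprod, hcntA, hcntB]
  simp only [hval]
  ring

/-! #### Block sums -/
set_option maxHeartbeats 2000000

lemma card_blockA (hne : v0 ≠ v1) :
    Fintype.card {e : Sym2 (Fin n) // P0 v0 v1 e} = n - 2 := by
  rw [Fintype.card_subtype]
  exact card_filter_P0 v0 v1 hne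

lemma card_blockB (hne : v0 ≠ v1) :
    Fintype.card {j : {e : Sym2 (Fin n) // ¬ P0 v0 v1 e} // P0 v1 v0 j.1} = n - 2 := by
  refine Eq.trans (card_subtype2 (fun e => ¬ P0 v0 v1 e) (P0 v1 v0)) ?_
  rw [← card_filter_P0 v1 v0 hne.symm]
  congr 1
  ext e
  simp only [mem_filter, mem_univ, true_and]
  constructor
  · rintro ⟨-, h2⟩; exact h2
  · intro h2; exact ⟨fun h' => h'.2.1 h2.1, h2⟩

lemma card_blockC (hne : v0 ≠ v1) :
    Fintype.card
      {k : {j : {e : Sym2 (Fin n) // ¬ P0 v0 v1 e} // ¬ P0 v1 v0 j.1} // P2 v0 v1 k.1.1} = 1 := by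
  refine Eq.trans (card_subtype3 (fun e => ¬ P0 v0 v1 e) (fun e => ¬ P0 v1 v0 e) (P2 v0 v1)) ?_
  rw [← Finset.card_singleton s(v0, v1)]
  congr 1
  ext e
  simp only [mem_filter, mem_univ, true_and, mem_singleton]
  constructor
  · rintro ⟨-, -, h3⟩; exact (P2_iff v0 v1 hne e).mp h3
  · rintro rfl
    exact ⟨fun h' => h'.2.1 (Sym2.mem_mk_right _ _), fun h' => h'.2.1 (Sym2.mem_mk_left _ _),
      Sym2.mem_mk_left _ _, Sym2.mem_mk_right _ _⟩

lemma sumPhiA (hne : v0 ≠ v1) :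
    ∑ σ, PhiA v0 v1 p q b σ
      = ∑ k ∈ range (n - 2 + 1),
          g0 (bb b + k) * ((n-2).choose k : ℝ) * p ^ k * q ^ (n - 2 - k) := by
  unfold PhiA
  refine Eq.trans (sum_pi_bool_count (g := fun k => g0 (bb b + k)) p q) ?_
  rw [card_blockA v0 v1 hne]

lemma sumPhiB (hne : v0 ≠ v1) (hpq : p + q = 1) :
    ∑ σ, PhiB v0 v1 p q b σ = (bb b : ℝ) + ((n - 2 : ℕ) : ℝ) * p := by
  unfold PhiB
  refine Eq.trans (sum_pi_bool_count (g := fun l => ((bb b + l : ℕ) : ℝ)) p q) ?_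
  rw [card_blockB v0 v1 hne]
  have h : ∀ l ∈ range (n - 2 + 1),
      ((bb b + l : ℕ) : ℝ) * ((n-2).choose l : ℝ) * p ^ l * q ^ (n - 2 - l)
        = (bb b : ℝ) * (((n-2).choose l : ℝ) * p ^ l * q ^ (n - 2 - l))
          + (l : ℝ) * ((n-2).choose l : ℝ) * p ^ l * q ^ (n - 2 - l) := by
    intro l _
    push_cast
    ring
  rw [Finset.sum_congr rfl h, Finset.sum_add_distrib, ← Finset.mul_sum,
    binom_thm (n-2) p q hpq, binom_mean (n-2) p q hpq, mul_one]

lemma sumPsiB (hne : v0 ≠ v1) (hpq : p + q = 1) :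
    ∑ τ, PsiB v0 v1 p q b τ = (if b then p else q) := by
  unfold PsiB
  refine Eq.trans (sum_pi_bool_split
    (fun k : {j : {e : Sym2 (Fin n) // ¬ P0 v0 v1 e} // ¬ P0 v1 v0 j.1} => P2 v0 v1 k.1.1)
    (PhiC v0 v1 p q b) (PsiC v0 v1 p q)) ?_
  have h1 : ∑ σ, PhiC v0 v1 p q b σ = (if b then p else q) := by
    unfold PhiC
    exact sum_pi_bool_ind (card_blockC v0 v1 hne) (chat v0 v1) b p q
  have h2 : ∑ σ, PsiC v0 v1 p q σ = 1 := by
    unfold PsiC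
    exact sum_pi_bool_one p q hpq
  rw [h1, h2, mul_one]

lemma sumPsiA (hne : v0 ≠ v1) (hpq : p + q = 1) :
    ∑ τ, PsiA v0 v1 p q b τ
      = ((bb b : ℝ) + ((n - 2 : ℕ) : ℝ) * p) * (if b then p else q) := by
  unfold PsiA
  refine Eq.trans (sum_pi_bool_split
    (fun j : {e : Sym2 (Fin n) // ¬ P0 v0 v1 e} => P0 v1 v0 j.1)
    (PhiB v0 v1 p q b) (PsiB v0 v1 p q b)) ?_
  rw [sumPhiB v0 v1 p q b hne hpq, sumPsiB v0 v1 p q b hne hpq]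

lemma sum_block (hne : v0 ≠ v1) (hpq : p + q = 1) :
    ∑ ω : Sym2 (Fin n) → Bool,
      ((if ω s(v0,v1) = b then (1:ℝ) else 0)
        * (((bb b + (univ.filter fun e => P0 v1 v0 e ∧ ω e = true).card : ℕ) : ℝ)
          * g0 (bb b + (univ.filter fun e => P0 v0 v1 e ∧ ω e = true).card)))
        * ∏ e : Sym2 (Fin n), (if ω e then p else q)
      = (∑ k ∈ range (n - 2 + 1),
            g0 (bb b + k) * ((n-2).choose k : ℝ) * p ^ k * q ^ (n - 2 - k))
          * (((bb b : ℝ) + ((n - 2 : ℕ) : ℝ) * p) * (if b then p else q)) := by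
  rw [Finset.sum_congr rfl fun ω _ => pointwise v0 v1 p q b hne ω]
  refine Eq.trans (sum_pi_bool_split (P0 v0 v1) (PhiA v0 v1 p q b) (PsiA v0 v1 p q b)) ?_
  rw [sumPhiA v0 v1 p q b hne, sumPsiA v0 v1 p q b hne hpq]

lemma main_calc (n : ℕ) (hn : 4 ≤ n) (p : ℝ) (hp0 : 0 < p) (hp1 : p < 1)
    (v0 v1 : Fin n) (hne : v0 ≠ v1) :
    ∫ ω, (deg ω v1 : ℝ) * invDeg ω v0 ∂(erMeasure n p) =
      ((n : ℝ) - 2) ^ 2 * p ^ 2 * (1 - p) *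
          binomExp (n - 3) p (fun i => 1 / (1 + (i : ℝ)) ^ 2)
        + (1 + ((n : ℝ) - 2) * p) * (1 - (1 - p) ^ (n - 1)) / ((n : ℝ) - 1) := by
  have hpq : p + (1 - p) = 1 := by ring
  rw [integral_erMeasure n p hp0.le hp1.le]
  have hsummand : ∀ ω : Sym2 (Fin n) → Bool,
      ((deg ω v1 : ℝ) * invDeg ω v0) * ∏ e : Sym2 (Fin n), (if ω e then p else 1 - p)
        = ∑ b : Bool, ((if ω s(v0,v1) = b then (1:ℝ) else 0)
            * (((bb b + (univ.filter fun e => P0 v1 v0 e ∧ ω e = true).card : ℕ) : ℝ)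
              * g0 (bb b + (univ.filter fun e => P0 v0 v1 e ∧ ω e = true).card)))
            * ∏ e : Sym2 (Fin n), (if ω e then p else 1 - p) := by
    intro ω
    rw [Fintype.sum_bool]
    have hd1 : deg ω v1 = (if ω s(v0,v1) = true then 1 else 0)
        + (univ.filter fun e => P0 v1 v0 e ∧ ω e = true).card := by
      rw [deg_split v1 v0 hne.symm ω, Sym2.eq_swap]
    have hd0 : deg ω v0 = (if ω s(v0,v1) = true then 1 else 0)
        + (univ.filter fun e => P0 v0 v1 e ∧ ω e = true).card := deg_split v0 v1 hne ω
    have hinv : invDeg ω v0 = g0 (deg ω v0) := rfl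
    rw [hinv, hd0, hd1]
    cases hc : ω s(v0,v1) <;> simp [hc, bb] <;> ring
  rw [Finset.sum_congr rfl fun ω _ => hsummand ω, Finset.sum_comm, Fintype.sum_bool,
    sum_block v0 v1 p (1-p) true hne hpq, sum_block v0 v1 p (1-p) false hne hpq]
  -- evaluate the two binomial sums
  have e1 : (∑ k ∈ range (n - 2 + 1),
        g0 (bb true + k) * ((n-2).choose k : ℝ) * p ^ k * (1-p) ^ (n - 2 - k))
      = (1 - (1-p) ^ (n - 2 + 1)) / ((((n-2:ℕ)) : ℝ) + 1) / p := by
    have step : ∀ k ∈ range (n - 2 + 1),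
        g0 (bb true + k) * ((n-2).choose k : ℝ) * p ^ k * (1-p) ^ (n - 2 - k)
          = (1 / (1 + (k : ℝ))) * ((n-2).choose k : ℝ) * p ^ k * (1-p) ^ (n - 2 - k) := by
      intro k _
      have : g0 (bb true + k) = 1 / (1 + (k : ℝ)) := by
        unfold g0 bb
        rw [if_pos rfl, if_neg (by omega)]
        push_cast
        ring
      rw [this]
    rw [Finset.sum_congr rfl step, binom_invsucc (n-2) p (1-p) hpq hp0.ne']
    rw [div_div]
  have e0 : (∑ k ∈ range (n - 2 + 1),
        g0 (bb false + k) * ((n-2).choose k : ℝ) * p ^ k * (1-p) ^ (n - 2 - k))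
      = (((n-2:ℕ)) : ℝ) * p * binomExp (n - 3) p (fun i => 1 / (1 + (i : ℝ)) ^ 2) := by
    have step : ∀ k ∈ range (n - 2 + 1),
        g0 (bb false + k) * ((n-2).choose k : ℝ) * p ^ k * (1-p) ^ (n - 2 - k)
          = (if k = 0 then 0 else 1 / (k : ℝ)) * ((n-2).choose k : ℝ) * p ^ k * (1-p) ^ (n - 2 - k) := by
      intro k _
      have : g0 (bb false + k) = (if k = 0 then 0 else 1 / (k : ℝ)) := by
        unfold g0 bb
        norm_num
      rw [this]
    rw [Finset.sum_congr rfl step, binom_invpos (n-2) p (1-p)]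
    congr 1
    unfold binomExp
    have h1 : n - 2 - 1 = n - 3 := by omega
    have h2 : n - 3 + 1 = n - 2 := by omega
    rw [h1, h2]
  rw [e1, e0]
  have hc2 : (((n-2:ℕ)) : ℝ) = (n : ℝ) - 2 := by
    have : (2:ℕ) ≤ n := by omega
    push_cast [Nat.cast_sub this]
    ring
  have hexp : n - 2 + 1 = n - 1 := by omega
  rw [hc2, hexp]
  have hn1 : (n : ℝ) - 1 ≠ 0 := by
    have : (4:ℝ) ≤ (n:ℝ) := by exact_mod_cast hn
    intro h; nlinarith
  have hbb : ((bb true : ℕ) : ℝ) = 1 := by unfold bb; norm_num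
  have hbb0 : ((bb false : ℕ) : ℝ) = 0 := by unfold bb; norm_num
  rw [hbb, hbb0]
  simp only [if_true, if_false, Bool.false_eq_true]
  set A := binomExp (n - 3) p (fun i => 1 / (1 + (i : ℝ)) ^ 2) with hA
  have hd : ((n:ℝ) - 2 + 1) = (n:ℝ) - 1 := by ring
  rw [hd]
  field_simp
  ring

end Aux

/-- Computation of `E_{n,p}[ d(2) ⋅ 1_{d(1)≥1}/d(1) ]` (Lemma `lem:main`, second display). -/
theorem stmt_7 (n : ℕ) (hn : 4 ≤ n) (p : ℝ) (hp : p ∈ Set.Ioo (0 : ℝ) 1) :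
    ∫ ω, (deg ω ⟨1, by omega⟩ : ℝ) * invDeg ω ⟨0, by omega⟩ ∂(erMeasure n p) =
      ((n : ℝ) - 2) ^ 2 * p ^ 2 * (1 - p) *
          binomExp (n - 3) p (fun i => 1 / (1 + (i : ℝ)) ^ 2)
        + (1 + ((n : ℝ) - 2) * p) * (1 - (1 - p) ^ (n - 1)) / ((n : ℝ) - 1) :=
  main_calc n hn p hp.1 hp.2 ⟨0, by omega⟩ ⟨1, by omega⟩ (by simp [Fin.ext_iff])

end ERW
end

section
/- For all integers m ≥ 1 and all p ∈ (0,1), if B_m is a Binomial(m,p) random variable then E[ (mp)² / (1 + B_m)² ] ≤ 4 + 256 e^{−2}. -/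
namespace ERW

/-- Uniform bound `E[(mp)²/(1+B_m)²] ≤ 4 + 256 e^{-2}` for `B_m ~ Bin(m,p)`. -/
theorem stmt_10 (m : ℕ) (hm : 1 ≤ m) (p : ℝ) (hp : p ∈ Set.Ioo (0 : ℝ) 1) :
    binomExp m p (fun k => ((m : ℝ) * p) ^ 2 / (1 + (k : ℝ)) ^ 2) ≤
      4 + 256 * Real.exp (-2) := by
  obtain ⟨hp0, hp1⟩ := hp
  have h1p : (0:ℝ) < 1 - p := by linarith
  set g : ℕ → ℝ := fun j => (Nat.choose (m+2) j : ℝ) * p ^ j * (1 - p) ^ (m + 2 - j)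
    with hg
  have hgnn : ∀ j, 0 ≤ g j := fun j => by
    apply mul_nonneg (mul_nonneg (by positivity) (by positivity)) (by positivity)
  have hfull : ∑ j ∈ Finset.range (m + 3), g j = 1 := by
    have := add_pow p (1 - p) (m + 2)
    simp only [add_sub_cancel, one_pow] at this
    rw [hg]
    calc ∑ j ∈ Finset.range (m + 3), (Nat.choose (m+2) j : ℝ) * p ^ j * (1 - p) ^ (m + 2 - j)
        = ∑ j ∈ Finset.range (m + 2 + 1), p ^ j * (1 - p) ^ (m + 2 - j) * (Nat.choose (m+2) j : ℝ) := by
          apply Finset.sum_congr rfl; intro j _; ring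
      _ = 1 := this.symm
  have hsplit : ∑ j ∈ Finset.range (m + 3), g j
      = (∑ k ∈ Finset.range (m + 1), g (k + 2)) + g 1 + g 0 := by
    rw [show m + 3 = (m + 2) + 1 from rfl, Finset.sum_range_succ',
      show m + 2 = (m + 1) + 1 from rfl, Finset.sum_range_succ']
  have hshift : ∑ k ∈ Finset.range (m + 1), g (k + 2) ≤ 1 := by
    have := hgnn 0
    have := hgnn 1
    nlinarith [hfull, hsplit]
  have key : binomExp m p (fun k => ((m : ℝ) * p) ^ 2 / (1 + (k : ℝ)) ^ 2) ≤ 2 := by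
    unfold binomExp
    have hstep : ∀ k ∈ Finset.range (m + 1),
        ((m : ℝ) * p) ^ 2 / (1 + (k : ℝ)) ^ 2 * (Nat.choose m k : ℝ) * p ^ k * (1 - p) ^ (m - k)
        ≤ 2 * g (k + 2) := by
      intro k hk
      have hk' : k ≤ m := Nat.lt_succ_iff.mp (Finset.mem_range.mp hk)
      -- key combinatorial identity
      have hid : ((m:ℝ)+1) * ((m:ℝ)+2) * (Nat.choose m k : ℝ)
          = ((k:ℝ)+1) * ((k:ℝ)+2) * (Nat.choose (m+2) (k+2) : ℝ) := by
        have h1 : (m+1) * Nat.choose m k = Nat.choose (m+1) (k+1) * (k+1) :=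
          Nat.add_one_mul_choose_eq m k
        have h2 : (m+2) * Nat.choose (m+1) (k+1) = Nat.choose (m+2) (k+2) * (k+2) :=
          Nat.add_one_mul_choose_eq (m+1) (k+1)
        have : (m+1) * ((m+2) * Nat.choose m k)
            = (k+1) * ((k+2) * Nat.choose (m+2) (k+2)) := by
          calc (m+1) * ((m+2) * Nat.choose m k) = (m+2) * ((m+1) * Nat.choose m k) := by ring
            _ = (m+2) * (Nat.choose (m+1) (k+1) * (k+1)) := by rw [h1]
            _ = ((m+2) * Nat.choose (m+1) (k+1)) * (k+1) := by ring
            _ = (Nat.choose (m+2) (k+2) * (k+2)) * (k+1) := by rw [h2]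
            _ = (k+1) * ((k+2) * Nat.choose (m+2) (k+2)) := by ring
        have hR : ((((m+1) * ((m+2) * Nat.choose m k)) : ℕ) : ℝ)
            = (((k+1) * ((k+2) * Nat.choose (m+2) (k+2)) : ℕ) : ℝ) := by exact_mod_cast this
        push_cast at hR
        linarith [hR]
      have hC : (0:ℝ) ≤ (Nat.choose m k : ℝ) := Nat.cast_nonneg _
      have hC' : (0:ℝ) ≤ (Nat.choose (m+2) (k+2) : ℝ) := Nat.cast_nonneg _
      have hknn : (0:ℝ) ≤ (k:ℝ) := Nat.cast_nonneg _
      have hmnn : (0:ℝ) ≤ (m:ℝ) := Nat.cast_nonneg _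
      have hden : (0:ℝ) < (1 + (k:ℝ)) ^ 2 := by positivity
      -- the core per-term inequality on the combinatorial part
      have hcore : ((m:ℝ))^2 / (1 + (k:ℝ)) ^ 2 * (Nat.choose m k : ℝ)
          ≤ 2 * (Nat.choose (m+2) (k+2) : ℝ) := by
        rw [div_mul_eq_mul_div, div_le_iff₀ hden]
        nlinarith [hid, hC, hC', hknn, hmnn, sq_nonneg ((k:ℝ)),
          mul_nonneg hC' (mul_nonneg hknn hknn)]
      have hpk : (0:ℝ) ≤ p ^ k * (1 - p) ^ (m - k) := by positivity
      have hmain : ((m : ℝ) * p) ^ 2 / (1 + (k : ℝ)) ^ 2 * (Nat.choose m k : ℝ) * p ^ k * (1 - p) ^ (m - k)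
          ≤ 2 * ((Nat.choose (m+2) (k+2) : ℝ) * p ^ (k+2) * (1 - p) ^ (m - k)) := by
        have e1 : ((m : ℝ) * p) ^ 2 / (1 + (k : ℝ)) ^ 2 * (Nat.choose m k : ℝ) * p ^ k * (1 - p) ^ (m - k)
            = (((m:ℝ))^2 / (1 + (k:ℝ)) ^ 2 * (Nat.choose m k : ℝ)) * (p ^ 2 * p ^ k * (1 - p) ^ (m - k)) := by
          field_simp
        have e2 : 2 * ((Nat.choose (m+2) (k+2) : ℝ) * p ^ (k+2) * (1 - p) ^ (m - k))
            = (2 * (Nat.choose (m+2) (k+2) : ℝ)) * (p ^ 2 * p ^ k * (1 - p) ^ (m - k)) := by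
          rw [pow_add]; ring
        rw [e1, e2]
        exact mul_le_mul_of_nonneg_right hcore (by positivity)
      have hgeq : g (k + 2) = (Nat.choose (m+2) (k+2) : ℝ) * p ^ (k+2) * (1 - p) ^ (m - k) := by
        rw [hg]
        simp only
        congr 2
        omega
      rw [hgeq]
      exact hmain
    calc ∑ k ∈ Finset.range (m + 1),
          ((m : ℝ) * p) ^ 2 / (1 + (k : ℝ)) ^ 2 * (Nat.choose m k : ℝ) * p ^ k * (1 - p) ^ (m - k)
        ≤ ∑ k ∈ Finset.range (m + 1), 2 * g (k + 2) := Finset.sum_le_sum hstep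
      _ = 2 * ∑ k ∈ Finset.range (m + 1), g (k + 2) := by rw [Finset.mul_sum]
      _ ≤ 2 * 1 := by linarith [hshift]
      _ = 2 := by norm_num
  have hexp : 0 < Real.exp (-2) := Real.exp_pos _
  linarith [key]

end ERW
end

section
/- Let m > 1 be an integer and p ∈ [0,1]. If B_m and B_{m−1} are Binomial(m,p) and Binomial(m−1,p) random variables respectively, then E[ 1_{{B_m ≥ 1}} / B_m ] = m p · E[ 1/(1 + B_{m−1})² ], where 1_{{B_m ≥ 1}}/B_m denotes the random variable equal to 0 when B_m = 0 and to 1/B_m when B_m ≥ 1. -/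
namespace ERW

/-- `E[1_{B_m≥1}/B_m] = m p ⋅ E[1/(1+B_{m-1})²]` for `B_m ~ Bin(m,p)`,
`B_{m-1} ~ Bin(m-1,p)`. -/
theorem stmt_18 (m : ℕ) (hm : 1 < m) (p : ℝ) (hp : p ∈ Set.Icc (0 : ℝ) 1) :
    binomExp m p (fun k => if k = 0 then 0 else 1 / (k : ℝ)) =
      (m : ℝ) * p * binomExp (m - 1) p (fun i => 1 / (1 + (i : ℝ)) ^ 2) := by
  obtain ⟨n, rfl⟩ : ∃ n, m = n + 1 := ⟨m - 1, by omega⟩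
  simp only [binomExp, Nat.add_sub_cancel]
  rw [Finset.sum_range_succ', Finset.mul_sum]
  simp only [if_true, zero_mul, add_zero]
  apply Finset.sum_congr rfl
  intro i hi
  have hk : (n + 1) - (i + 1) = n - i := by omega
  have hchoose : ((n + 1 : ℕ) : ℝ) * ((n.choose i : ℕ) : ℝ)
      = ((i + 1 : ℕ) : ℝ) * (((n + 1).choose (i + 1) : ℕ) : ℝ) := by
    have h := Nat.add_one_mul_choose_eq n i
    have h2 : (n + 1) * n.choose i = (i + 1) * (n + 1).choose (i + 1) := by
      simpa [Nat.succ_eq_add_one, Nat.mul_comm] using h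
    exact_mod_cast h2
  have h1 : ((i : ℝ) + 1) ≠ 0 := by positivity
  simp only [Nat.succ_ne_zero, if_false, hk]
  push_cast at hchoose ⊢
  rw [pow_succ']
  field_simp
  linear_combination (-p * p ^ i * (1 - p) ^ (n - i) * ((i : ℝ) + 1)) * hchoose


end ERW
end
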